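/- Let b = (⟨η_α : α < λ⟩, A) be a base for S and B^b = B_{(λ,F^b)} the Boolean algebra it determines, where F^b = {f^b_α : α < λ} and f^b_α(β) = 1 iff α = β, or α ≠ β and η_α ∩ η_β ∈ A and η_α <_lex η_β. Then for every i < cf(λ), the sequence ⟨x_α : χ_i ≤ α < χ_{i+1}⟩ of generators is ideal-independent in B^b; consequently the spread, hereditary density, and hereditary Lindelöf degree of B^b all equal λ. -/

import Mathlib

open Cardinal

/-- The lexicographic order on `μ^μ`. -/
def lexLt (μ : Cardinal.{0}) (η ν : Ordinal.{0} → Ordinal.{0}) : Prop :=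
  ∃ ξ < μ.ord, (∀ ζ < ξ, η ζ = ν ζ) ∧ η ξ < ν ξ

/-- The first coordinate where `η` and `ν` differ. -/
noncomputable def diffPt (η ν : Ordinal.{0} → Ordinal.{0}) : Ordinal.{0} :=
  sInf {ξ | η ξ ≠ ν ξ}

/-- Restriction of `η` to `δ`, normalized by `0` beyond `δ`. -/
noncomputable def restr (η : Ordinal.{0} → Ordinal.{0}) (δ : Ordinal.{0}) :
    Ordinal.{0} → Ordinal.{0} :=
  fun ξ => if ξ < δ then η ξ else 0

/-- `η ∩ ν`: the longest common initial segment, as a pair (length, sequence). -/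
noncomputable def meetSeq (η ν : Ordinal.{0} → Ordinal.{0}) :
    Ordinal.{0} × (Ordinal.{0} → Ordinal.{0}) :=
  (diffPt η ν, restr η (diffPt η ν))

open Classical in
/-- The function `f^b_α : λ → 2` determined by a base `b = (⟨η_α⟩, A)`:
`f^b_α (β) = 1` iff `α = β`, or `α ≠ β`, `η_α ∩ η_β ∈ A` and `η_α <_lex η_β`. -/
noncomputable def fb (μ : Cardinal.{0}) (η : Ordinal.{0} → (Ordinal.{0} → Ordinal.{0}))
    (A : Set (Ordinal.{0} × (Ordinal.{0} → Ordinal.{0}))) (α β : Ordinal.{0}) : Bool :=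
  if α = β ∨ (α ≠ β ∧ meetSeq (η α) (η β) ∈ A ∧ lexLt μ (η α) (η β)) then true else false

/-- `y : Ordinal → C` satisfies the defining relations of `B_{(w,F)}` (with `w` a set
of ordinals). -/
def SatisfiesRelations (w : Set Ordinal.{0}) (F : Set (Ordinal.{0} → Bool))
    {C : Type*} [BooleanAlgebra C] (y : Ordinal.{0} → C) : Prop :=
  ∀ u₀ u₁ : Finset Ordinal.{0}, ↑u₀ ⊆ w → ↑u₁ ⊆ w →
    (¬ ∃ f ∈ F, (∀ α ∈ u₀, f α = false) ∧ (∀ α ∈ u₁, f α = true)) →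
    u₁.inf y ⊓ u₀.inf (fun α => (y α)ᶜ) = ⊥

/-- `B` with generators `⟨x_α : α ∈ w⟩` is (a copy of) the Boolean algebra `B_{(w,F)}`. -/
def IsBwF (w : Set Ordinal.{0}) (F : Set (Ordinal.{0} → Bool))
    (B : Type*) [BooleanAlgebra B] (x : Ordinal.{0} → B) : Prop :=
  SatisfiesRelations w F x ∧
    ∀ (C : Type*) [BooleanAlgebra C], ∀ y : Ordinal.{0} → C, SatisfiesRelations w F y →
      ∃ g : BoundedLatticeHom B C, (∀ α ∈ w, g (x α) = y α) ∧
        ∀ g' : BoundedLatticeHom B C, (∀ α ∈ w, g' (x α) = y α) → g' = g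

/-- `a` is an ideal-independent sequence of length `κ`. -/
def IdealIndependent {B : Type*} [BooleanAlgebra B] (κ : Ordinal.{0})
    (a : Ordinal.{0} → B) : Prop :=
  ∀ ξ < κ, ∀ w : Finset Ordinal.{0}, (∀ ζ ∈ w, ζ < κ ∧ ζ ≠ ξ) → ¬ a ξ ≤ w.sup a

/-- `a` is a left-separated sequence of length `κ`. -/
def LeftSeparated {B : Type*} [BooleanAlgebra B] (κ : Ordinal.{0})
    (a : Ordinal.{0} → B) : Prop :=
  ∀ ξ < κ, ∀ w : Finset Ordinal.{0}, (∀ ζ ∈ w, ζ < κ ∧ ξ < ζ) → ¬ a ξ ≤ w.sup a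

/-- `a` is a right-separated sequence of length `κ`. -/
def RightSeparated {B : Type*} [BooleanAlgebra B] (κ : Ordinal.{0})
    (a : Ordinal.{0} → B) : Prop :=
  ∀ ξ < κ, ∀ w : Finset Ordinal.{0}, (∀ ζ ∈ w, ζ < ξ) → ¬ a ξ ≤ w.sup a

/-- The spread of `B`: the sup of lengths of ideal-independent sequences. -/
noncomputable def spreadC (B : Type*) [BooleanAlgebra B] : Cardinal.{0} :=
  sSup {κ : Cardinal.{0} | ∃ a : Ordinal.{0} → B, IdealIndependent κ.ord a}

/-- The hereditary density of `B`: the sup of lengths of left-separated sequences. -/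
noncomputable def hdC (B : Type*) [BooleanAlgebra B] : Cardinal.{0} :=
  sSup {κ : Cardinal.{0} | ∃ a : Ordinal.{0} → B, LeftSeparated κ.ord a}

/-- The hereditary Lindelöf degree of `B`: the sup of lengths of right-separated
sequences. -/
noncomputable def hLC (B : Type*) [BooleanAlgebra B] : Cardinal.{0} :=
  sSup {κ : Cardinal.{0} | ∃ a : Ordinal.{0} → B, RightSeparated κ.ord a}

universe u

lemma diffPt_comm (η ν : Ordinal.{0} → Ordinal.{0}) : diffPt η ν = diffPt ν η := by
  unfold diffPt
  congr 1
  ext ξ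
  exact ne_comm

lemma eq_of_lt_diffPt {η ν : Ordinal.{0} → Ordinal.{0}} {ξ : Ordinal} (h : ξ < diffPt η ν) :
    η ξ = ν ξ := by
  by_contra hne
  exact absurd (csInf_le' (s := {ξ | η ξ ≠ ν ξ}) hne) (not_le.mpr h)

lemma meetSeq_comm (η ν : Ordinal.{0} → Ordinal.{0}) : meetSeq η ν = meetSeq ν η := by
  unfold meetSeq
  rw [← diffPt_comm η ν]
  refine Prod.ext rfl ?_
  funext ξ
  show (if ξ < diffPt η ν then η ξ else 0) = (if ξ < diffPt η ν then ν ξ else 0)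
  split_ifs with h
  · exact eq_of_lt_diffPt h
  · rfl

lemma fb_self (μ : Cardinal.{0}) (η : Ordinal.{0} → (Ordinal.{0} → Ordinal.{0}))
    (A : Set (Ordinal.{0} × (Ordinal.{0} → Ordinal.{0}))) (α : Ordinal.{0}) :
    fb μ η A α α = true := by
  unfold fb
  exact if_pos (Or.inl rfl)

lemma fb_eq_false {μ : Cardinal.{0}} {η : Ordinal.{0} → (Ordinal.{0} → Ordinal.{0})}
    {A : Set (Ordinal.{0} × (Ordinal.{0} → Ordinal.{0}))} {α β : Ordinal.{0}}
    (hne : α ≠ β) (hA : meetSeq (η α) (η β) ∉ A) : fb μ η A α β = false := by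
  unfold fb
  rw [if_neg]
  rintro (rfl | ⟨-, hmem, -⟩)
  · exact hne rfl
  · exact hA hmem

lemma satisfiesRelations_of_mem {w : Set Ordinal.{0}} {F : Set (Ordinal.{0} → Bool)}
    {f : Ordinal.{0} → Bool} (hf : f ∈ F) : SatisfiesRelations w F f := by
  intro u₀ u₁ _ _ hno
  by_contra hne
  have hb : u₁.inf f ⊓ u₀.inf (fun α => (f α)ᶜ) = ⊤ := by
    revert hne
    have : ∀ b : Bool, b ≠ ⊥ → b = ⊤ := by decide
    exact this _
  apply hno
  refine ⟨f, hf, ?_, ?_⟩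
  · intro α hα
    have h1 : ⊤ ≤ (f α)ᶜ := hb ▸ le_trans inf_le_right (Finset.inf_le hα)
    revert h1
    have : ∀ b : Bool, ⊤ ≤ bᶜ → b = false := by decide
    exact this _
  · intro α hα
    have h1 : ⊤ ≤ f α := hb ▸ le_trans inf_le_left (Finset.inf_le hα)
    revert h1
    have : ∀ b : Bool, ⊤ ≤ b → b = true := by decide
    exact this _


instance {α : Type u} [HImp α] : HImp (ULift.{v} α) := ⟨fun a b => ⟨a.down ⇨ b.down⟩⟩

instance {α : Type u} [BooleanAlgebra α] : BooleanAlgebra (ULift.{v} α) :=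
  ULift.down_injective.booleanAlgebra _ Iff.rfl Iff.rfl (fun _ _ => rfl) (fun _ _ => rfl) rfl rfl
    (fun _ => rfl) (fun _ _ => rfl) (fun _ _ => rfl)

def uliftHom (α : Type u) [BooleanAlgebra α] : BoundedLatticeHom α (ULift.{v} α) where
  toFun := ULift.up
  map_sup' _ _ := rfl
  map_inf' _ _ := rfl
  map_top' := rfl
  map_bot' := rfl

-- closure
section Clos

variable {B : Type u} [BooleanAlgebra B]

def stage (s0 : Set B) : ℕ → Set B
  | 0 => s0 ∪ {⊥, ⊤}
  | n + 1 => stage s0 n ∪ Set.image2 (· ⊔ ·) (stage s0 n) (stage s0 n) ∪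
      Set.image2 (· ⊓ ·) (stage s0 n) (stage s0 n) ∪ (compl '' stage s0 n)

lemma stage_mono (s0 : Set B) : Monotone (stage s0) :=
  monotone_nat_of_le_succ fun _ =>
    (Set.subset_union_left.trans Set.subset_union_left).trans Set.subset_union_left

def closSet (s0 : Set B) : Set B := ⋃ n, stage s0 n

variable {s0 : Set B}

lemma subset_closSet (s0 : Set B) : s0 ⊆ closSet s0 :=
  fun _ ha => Set.mem_iUnion.mpr ⟨0, Or.inl ha⟩

lemma bot_mem_closSet : ⊥ ∈ closSet s0 :=
  Set.mem_iUnion.mpr ⟨0, Or.inr (Or.inl rfl)⟩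

lemma top_mem_closSet : ⊤ ∈ closSet s0 :=
  Set.mem_iUnion.mpr ⟨0, Or.inr (Or.inr rfl)⟩

lemma sup_mem_closSet {a b : B} (ha : a ∈ closSet s0) (hb : b ∈ closSet s0) :
    a ⊔ b ∈ closSet s0 := by
  obtain ⟨m, hm⟩ := Set.mem_iUnion.mp ha
  obtain ⟨n, hn⟩ := Set.mem_iUnion.mp hb
  exact Set.mem_iUnion.mpr ⟨max m n + 1, Or.inl (Or.inl (Or.inr
    (Set.mem_image2_of_mem (stage_mono s0 (le_max_left m n) hm)
      (stage_mono s0 (le_max_right m n) hn))))⟩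

lemma inf_mem_closSet {a b : B} (ha : a ∈ closSet s0) (hb : b ∈ closSet s0) :
    a ⊓ b ∈ closSet s0 := by
  obtain ⟨m, hm⟩ := Set.mem_iUnion.mp ha
  obtain ⟨n, hn⟩ := Set.mem_iUnion.mp hb
  exact Set.mem_iUnion.mpr ⟨max m n + 1, Or.inl (Or.inr
    (Set.mem_image2_of_mem (stage_mono s0 (le_max_left m n) hm)
      (stage_mono s0 (le_max_right m n) hn)))⟩

lemma compl_mem_closSet {a : B} (ha : a ∈ closSet s0) : aᶜ ∈ closSet s0 := by
  obtain ⟨m, hm⟩ := Set.mem_iUnion.mp ha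
  exact Set.mem_iUnion.mpr ⟨m + 1, Or.inr ⟨a, hm, rfl⟩⟩

instance : Max ↥(closSet s0) := ⟨fun a b => ⟨a.1 ⊔ b.1, sup_mem_closSet a.2 b.2⟩⟩
instance : Min ↥(closSet s0) := ⟨fun a b => ⟨a.1 ⊓ b.1, inf_mem_closSet a.2 b.2⟩⟩
instance : Top ↥(closSet s0) := ⟨⟨⊤, top_mem_closSet⟩⟩
instance : Bot ↥(closSet s0) := ⟨⟨⊥, bot_mem_closSet⟩⟩
instance : Compl ↥(closSet s0) := ⟨fun a => ⟨a.1ᶜ, compl_mem_closSet a.2⟩⟩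
instance : SDiff ↥(closSet s0) :=
  ⟨fun a b => ⟨a.1 \ b.1, by rw [sdiff_eq]; exact inf_mem_closSet a.2 (compl_mem_closSet b.2)⟩⟩
instance : HImp ↥(closSet s0) :=
  ⟨fun a b => ⟨a.1 ⇨ b.1, by rw [himp_eq]; exact sup_mem_closSet b.2 (compl_mem_closSet a.2)⟩⟩

instance : BooleanAlgebra ↥(closSet s0) :=
  Subtype.val_injective.booleanAlgebra _ Iff.rfl Iff.rfl (fun _ _ => rfl) (fun _ _ => rfl) rfl rfl
    (fun _ => rfl) (fun _ _ => rfl) (fun _ _ => rfl)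

end Clos

-- BPI: separation by homomorphisms into Bool
open scoped symmDiff in
lemma exists_boolHom {B : Type u} [BooleanAlgebra B] {b : B} (hb : b ≠ ⊥) :
    ∃ f : BoundedLatticeHom B Bool, f b = true := by
  classical
  set R := AsBoolRing B
  set xR : R := toBoolRing b with hxRdef
  have hxR : xR ≠ 0 := fun h => hb h
  haveI : Nontrivial R := ⟨⟨xR, 0, hxR⟩⟩
  have hproper : Ideal.span {1 + xR} ≠ ⊤ := by
    rw [Ideal.ne_top_iff_one]
    intro h1
    obtain ⟨r, hr⟩ := Ideal.mem_span_singleton'.mp h1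
    apply hxR
    calc xR = xR * (r * (1 + xR)) := by rw [hr, mul_one]
      _ = r * (xR * 1 + xR * xR) := by ring
      _ = r * (xR + xR) := by rw [mul_one, BooleanRing.mul_self]
      _ = 0 := by rw [BooleanRing.add_self, mul_zero]
  obtain ⟨M, hM, hle⟩ := Ideal.exists_le_maximal _ hproper
  haveI := hM.isPrime
  have hxM : xR ∉ M := by
    intro hx
    have h1 : (1 : R) ∈ M := by
      have := M.add_mem (hle (Ideal.subset_span rfl)) hx
      rwa [add_assoc, BooleanRing.add_self, add_zero] at this
    exact hM.ne_top (Ideal.eq_top_of_isUnit_mem M h1 isUnit_one)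
  have hmem_sup : ∀ a c : R, a + c + a * c ∈ M ↔ a ∈ M ∧ c ∈ M := by
    intro a c
    constructor
    · intro h
      constructor
      · have : a = a * (a + c + a * c) := by
          have h1 : a * (a + c + a * c) = a * a + a * c + a * a * c := by ring
          rw [h1, BooleanRing.mul_self, add_assoc, BooleanRing.add_self, add_zero]
        rw [this]; exact Ideal.mul_mem_left M a h
      · have : c = c * (a + c + a * c) := by
          have h1 : c * (a + c + a * c) = c * a + c * c + c * c * a := by ring
          rw [h1, BooleanRing.mul_self, add_comm (c*a) c, add_assoc,
            BooleanRing.add_self, add_zero]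
        rw [this]; exact Ideal.mul_mem_left M c h
    · rintro ⟨ha, hc⟩
      exact M.add_mem (M.add_mem ha hc) (Ideal.mul_mem_left M a hc)
  have hsup_ring : ∀ a c : B, toBoolRing (a ⊔ c) =
      toBoolRing a + toBoolRing c + toBoolRing a * toBoolRing c := by
    intro a c
    rw [← symmDiff_symmDiff_inf a c, toBoolRing_symmDiff, toBoolRing_symmDiff, toBoolRing_inf]
  refine ⟨{ toFun := fun a => if toBoolRing a ∈ M then false else true,
            map_sup' := ?_, map_inf' := ?_, map_top' := ?_, map_bot' := ?_ }, ?_⟩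
  · intro a c
    show _ = (if toBoolRing a ∈ M then false else true) ⊔ (if toBoolRing c ∈ M then false else true)
    by_cases ha : toBoolRing a ∈ M <;> by_cases hc : toBoolRing c ∈ M <;>
      simp only [ha, hc, if_pos, if_neg, if_true, if_false] <;>
      rw [hsup_ring a c]
    · rw [if_pos ((hmem_sup _ _).mpr ⟨ha, hc⟩)]
      rfl
    · rw [if_neg (fun h => hc ((hmem_sup _ _).mp h).2)]
      rfl
    · rw [if_neg (fun h => ha ((hmem_sup _ _).mp h).1)]
      rfl
    · rw [if_neg (fun h => ha ((hmem_sup _ _).mp h).1)]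
      rfl
  · intro a c
    show _ = (if toBoolRing a ∈ M then false else true) ⊓ (if toBoolRing c ∈ M then false else true)
    have hic : toBoolRing (a ⊓ c) = toBoolRing a * toBoolRing c := toBoolRing_inf a c
    by_cases ha : toBoolRing a ∈ M <;> by_cases hc : toBoolRing c ∈ M <;>
      simp only [ha, hc, if_pos, if_neg, if_true, if_false] <;> rw [hic]
    · rw [if_pos (Ideal.mul_mem_right _ M ha)]
      rfl
    · rw [if_pos (Ideal.mul_mem_right _ M ha)]
      rfl
    · rw [if_pos (Ideal.mul_mem_left M _ hc)]
      rfl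
    · rw [if_neg (fun h => (hM.isPrime.mem_or_mem h).elim ha hc)]
      rfl
  · show (if toBoolRing (⊤ : B) ∈ M then false else true) = ⊤
    rw [toBoolRing_top, if_neg (fun h => hM.ne_top (Ideal.eq_top_of_isUnit_mem M h isUnit_one))]
    rfl
  · show (if toBoolRing (⊥ : B) ∈ M then false else true) = ⊥
    rw [toBoolRing_bot, if_pos M.zero_mem]
    rfl
  · show (if toBoolRing b ∈ M then false else true) = true
    rw [if_neg hxM]

-- transfer lemmas
lemma satisfiesRelations_of_injective {w : Set Ordinal.{0}} {F : Set (Ordinal.{0} → Bool)}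
    {C : Type*} {D : Type*} [BooleanAlgebra C] [BooleanAlgebra D]
    (h : BoundedLatticeHom C D) (hinj : Function.Injective h) {y : Ordinal.{0} → C}
    (hy : SatisfiesRelations w F (fun α => h (y α))) : SatisfiesRelations w F y := by
  intro u₀ u₁ h₀ h₁ hno
  apply hinj
  have hthis := hy u₀ u₁ h₀ h₁ hno
  rw [map_inf, map_bot, map_finset_inf, map_finset_inf]
  have e2 : u₀.inf (⇑h ∘ fun α => (y α)ᶜ) = u₀.inf (fun α => (h (y α))ᶜ) :=
    Finset.inf_congr rfl (fun a _ => map_compl' h (y a))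
  rw [e2]
  exact hthis

lemma satisfiesRelations_hom {w : Set Ordinal.{0}} {F : Set (Ordinal.{0} → Bool)}
    {C : Type*} {D : Type*} [BooleanAlgebra C] [BooleanAlgebra D]
    (h : BoundedLatticeHom C D) {y : Ordinal.{0} → C}
    (hy : SatisfiesRelations w F y) : SatisfiesRelations w F (fun α => h (y α)) := by
  intro u₀ u₁ h₀ h₁ hno
  have happ := congrArg h (hy u₀ u₁ h₀ h₁ hno)
  rw [map_inf, map_bot, map_finset_inf, map_finset_inf] at happ
  show u₁.inf (fun α => h (y α)) ⊓ u₀.inf (fun α => (h (y α))ᶜ) = ⊥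
  have e2 : u₀.inf (fun α => (h (y α))ᶜ) = u₀.inf (⇑h ∘ fun α => (y α)ᶜ) :=
    Finset.inf_congr rfl (fun a _ => (map_compl' h (y a)).symm)
  rw [e2]
  exact happ

def dBoolHom : BoundedLatticeHom (ULift.{v} Bool) Bool where
  toFun := ULift.down
  map_sup' _ _ := rfl
  map_inf' _ _ := rfl
  map_top' := rfl
  map_bot' := rfl

lemma not_le_sup {μ : Cardinal.{0}} {η : Ordinal.{0} → (Ordinal.{0} → Ordinal.{0})}
    {A : Set (Ordinal.{0} × (Ordinal.{0} → Ordinal.{0}))} {lam : Cardinal.{0}}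
    {B : Type u} [BooleanAlgebra B] {x : Ordinal.{0} → B}
    (hB : IsBwF.{u, v} (Set.Iio lam.ord) {f | ∃ α < lam.ord, f = fb μ η A α} B x)
    {α : Ordinal.{0}} (hα : α < lam.ord) {u : Finset Ordinal.{0}}
    (hu : ∀ β ∈ u, β < lam.ord ∧ fb μ η A α β = false) : ¬ x α ≤ u.sup x := by
  have hsat : SatisfiesRelations (Set.Iio lam.ord) {f | ∃ α < lam.ord, f = fb μ η A α}
      (fun β => ULift.up.{v} (fb μ η A α β)) := by
    apply satisfiesRelations_of_injective (dBoolHom.{v}) ULift.down_injective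
    exact satisfiesRelations_of_mem ⟨α, hα, rfl⟩
  obtain ⟨g0, hg0, -⟩ := hB.2 (ULift.{v} Bool) _ hsat
  let g : BoundedLatticeHom B Bool := dBoolHom.comp g0
  have hg : ∀ β, β < lam.ord → g (x β) = fb μ η A α β := by
    intro β hβ
    show (g0 (x β)).down = _
    rw [hg0 β hβ]
  intro hle
  have hm : g (x α) ≤ g (u.sup x) := OrderHomClass.mono g hle
  rw [hg α hα, fb_self] at hm
  have hsup : g (u.sup x) = ⊥ := by
    rw [map_finset_sup]
    refine le_bot_iff.mp (Finset.sup_le fun β hβ => ?_)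
    rw [Function.comp_apply, hg β (hu β hβ).1, (hu β hβ).2]
    decide
  rw [hsup] at hm
  exact absurd hm (by decide)

open scoped symmDiff
lemma mk_le_of_isBwF {B : Type u} [BooleanAlgebra B] {lam : Cardinal.{0}} (hlam : ℵ₀ ≤ lam)
    {F : Set (Ordinal.{0} → Bool)} {x : Ordinal.{0} → B}
    (hB : IsBwF.{u, v} (Set.Iio lam.ord) F B x) : #B ≤ Cardinal.lift.{u} lam := by
  classical
  set x' : lam.ord.ToType → B := fun t => x ((Ordinal.ToType.mk (o := lam.ord)).symm t).val with hx'
  set s0 : Set B := Set.range x' with hs0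
  have hxmem : ∀ α, α < lam.ord → x α ∈ s0 := by
    intro α hα
    refine ⟨Ordinal.ToType.mk (o := lam.ord) ⟨α, hα⟩, ?_⟩
    rw [hx']
    simp
  have hℵ : ℵ₀ ≤ Cardinal.lift.{u} lam := aleph0_le_lift.mpr hlam
  have hs0card : #↥s0 ≤ Cardinal.lift.{u} lam := by
    have h1 := Cardinal.mk_range_le_lift (f := x')
    rw [Cardinal.lift_uzero, Cardinal.mk_toType, Cardinal.card_ord] at h1
    exact h1
  have hstage : ∀ n, #↥(stage s0 n) ≤ Cardinal.lift.{u} lam := by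
    intro n
    induction n with
    | zero =>
      rw [show stage s0 0 = s0 ∪ {⊥, ⊤} from rfl]
      refine le_trans (Cardinal.mk_union_le _ _) ?_
      refine Cardinal.add_le_of_le hℵ hs0card ?_
      refine le_trans Cardinal.mk_insert_le ?_
      rw [Cardinal.mk_singleton]
      exact le_trans (le_of_lt (by exact_mod_cast Cardinal.nat_lt_aleph0 2)) hℵ
    | succ n ih =>
      have him2 : ∀ op : B → B → B,
          #↥(Set.image2 op (stage s0 n) (stage s0 n)) ≤ Cardinal.lift.{u} lam := fun op =>
        le_trans Cardinal.mk_image2_le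
          (le_trans (mul_le_mul' ih ih) (le_of_eq (Cardinal.mul_eq_self hℵ)))
      rw [show stage s0 (n+1) = stage s0 n ∪ Set.image2 (· ⊔ ·) (stage s0 n) (stage s0 n) ∪
        Set.image2 (· ⊓ ·) (stage s0 n) (stage s0 n) ∪ (compl '' stage s0 n) from rfl]
      refine le_trans (Cardinal.mk_union_le _ _) (Cardinal.add_le_of_le hℵ ?_ ?_)
      · refine le_trans (Cardinal.mk_union_le _ _) (Cardinal.add_le_of_le hℵ ?_ (him2 _))
        exact le_trans (Cardinal.mk_union_le _ _) (Cardinal.add_le_of_le hℵ ih (him2 _))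
      · exact le_trans Cardinal.mk_image_le ih
  have hclos : #↥(closSet s0) ≤ Cardinal.lift.{u} lam := by
    have h1 := Cardinal.mk_iUnion_le_lift (f := fun n : ℕ => stage s0 n)
    simp only [Cardinal.lift_uzero] at h1
    rw [Cardinal.mk_nat, Cardinal.lift_aleph0] at h1
    refine le_trans h1 ?_
    have h2 : (⨆ i, #↥(stage s0 i)) ≤ Cardinal.lift.{u} lam := ciSup_le' hstage
    refine le_trans (mul_le_mul' le_rfl h2) ?_
    rw [Cardinal.mul_eq_max le_rfl hℵ]
    exact max_le hℵ le_rfl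
  -- smallness
  haveI hsm0 : Small.{0} ↥(closSet s0) := by
    have h2 : #↥(closSet s0) ≤ #(ULift.{u} lam.ord.ToType) := by
      rwa [Cardinal.mk_uLift, Cardinal.mk_toType, Cardinal.card_ord]
    obtain ⟨f⟩ := Cardinal.le_def _ _ |>.mp h2
    haveI : Small.{0} (ULift.{u} lam.ord.ToType) := ⟨⟨lam.ord.ToType, ⟨Equiv.ulift⟩⟩⟩
    exact small_of_injective f.injective
  haveI hsmv : Small.{v} ↥(closSet s0) := small_lift.{_, v, 0} _
  set C := Shrink.{v} ↥(closSet s0) with hC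
  set e : ↥(closSet s0) ≃ C := equivShrink _ with he
  letI : Max C := ⟨fun a b => e (e.symm a ⊔ e.symm b)⟩
  letI : Min C := ⟨fun a b => e (e.symm a ⊓ e.symm b)⟩
  letI : Top C := ⟨e ⊤⟩
  letI : Bot C := ⟨e ⊥⟩
  letI : Compl C := ⟨fun a => e (e.symm a)ᶜ⟩
  letI : SDiff C := ⟨fun a b => e (e.symm a \ e.symm b)⟩
  letI : HImp C := ⟨fun a b => e (e.symm a ⇨ e.symm b)⟩
  letI : LE C := ⟨fun a b => e.symm a ≤ e.symm b⟩
  letI : LT C := ⟨fun a b => e.symm a < e.symm b⟩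
  letI : BooleanAlgebra C :=
    e.symm.injective.booleanAlgebra e.symm Iff.rfl Iff.rfl (fun _ _ => e.symm_apply_apply _)
      (fun _ _ => e.symm_apply_apply _) (e.symm_apply_apply _) (e.symm_apply_apply _)
      (fun _ => e.symm_apply_apply _) (fun _ _ => e.symm_apply_apply _)
      (fun _ _ => e.symm_apply_apply _)
  let ι : BoundedLatticeHom C B :=
    { toFun := fun c => (e.symm c).val
      map_sup' := fun a b => by
        show (e.symm (e (e.symm a ⊔ e.symm b))).val = _
        rw [Equiv.symm_apply_apply]
        rfl
      map_inf' := fun a b => by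
        show (e.symm (e (e.symm a ⊓ e.symm b))).val = _
        rw [Equiv.symm_apply_apply]
        rfl
      map_top' := by
        show (e.symm (e ⊤)).val = _
        rw [Equiv.symm_apply_apply]
        rfl
      map_bot' := by
        show (e.symm (e ⊥)).val = _
        rw [Equiv.symm_apply_apply]
        rfl }
  have hιinj : Function.Injective ι :=
    fun a b hab => e.symm.injective (Subtype.val_injective hab)
  set y : Ordinal.{0} → C :=
    fun α => if h : α < lam.ord then e ⟨x α, subset_closSet s0 (hxmem α h)⟩ else ⊥ with hy
  have hyval : ∀ α (h : α < lam.ord), ι (y α) = x α := by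
    intro α h
    show (e.symm (y α)).val = x α
    rw [hy]
    simp only [dif_pos h, Equiv.symm_apply_apply]
  have hsaty : SatisfiesRelations (Set.Iio lam.ord) F y := by
    apply satisfiesRelations_of_injective ι hιinj
    intro u₀ u₁ h₀ h₁ hno
    have hthis := hB.1 u₀ u₁ h₀ h₁ hno
    have e1 : u₁.inf (fun α => ι (y α)) = u₁.inf x :=
      Finset.inf_congr rfl (fun a ha => hyval a (h₁ ha))
    have e2 : u₀.inf (fun α => ((fun α => ι (y α)) α)ᶜ) = u₀.inf (fun α => (x α)ᶜ) :=
      Finset.inf_congr rfl (fun a ha => by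
        show (ι (y a))ᶜ = (x a)ᶜ
        rw [hyval a (h₀ ha)])
    rw [e1, e2]
    exact hthis
  obtain ⟨g, hg, -⟩ := hB.2 C y hsaty
  set ρ : BoundedLatticeHom B B := ι.comp g with hρ
  have hρx : ∀ α ∈ Set.Iio lam.ord, ρ (x α) = x α := by
    intro α hα
    show ι (g (x α)) = x α
    rw [hg α hα]
    exact hyval α hα
  have hρmem : ∀ b : B, ρ b ∈ closSet s0 := fun b => (e.symm (g b)).2
  have hfix : ∀ b : B, ρ b = b := by
    intro b
    by_contra hne
    have hsd : ρ b ∆ b ≠ ⊥ := fun h => hne (symmDiff_eq_bot.mp h)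
    obtain ⟨f, hf⟩ := exists_boolHom hsd
    let h₁ : BoundedLatticeHom B (ULift.{v} Bool) := (uliftHom Bool).comp f
    let h₂ : BoundedLatticeHom B (ULift.{v} Bool) := h₁.comp ρ
    have hsat1 : SatisfiesRelations (Set.Iio lam.ord) F (fun α => h₁ (x α)) :=
      satisfiesRelations_hom h₁ hB.1
    obtain ⟨g', hg', huniq'⟩ := hB.2 (ULift.{v} Bool) (fun α => h₁ (x α)) hsat1
    have e₁ : h₁ = g' := huniq' h₁ (fun α _ => rfl)
    have e₂ : h₂ = g' := huniq' h₂ (fun α hα => by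
      show h₁ (ρ (x α)) = _
      rw [hρx α hα])
    have hbb : h₁ (ρ b) = h₁ b := by
      have := congrArg (fun (h : BoundedLatticeHom B (ULift.{v} Bool)) => h b) (e₂.trans e₁.symm)
      exact this
    have hfb : f (ρ b) = f b := congrArg ULift.down hbb
    rw [map_symmDiff' f, hfb, symmDiff_self] at hf
    exact absurd hf (by decide)
  have huniv : closSet s0 = Set.univ :=
    Set.eq_univ_of_forall (fun b => hfix b ▸ hρmem b)
  have hBeq : #B = #↥(closSet s0) := by
    rw [huniv, Cardinal.mk_univ]
  rw [hBeq]
  exact hclos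

lemma le_lam_of_pairwise_ne {B : Type u} [BooleanAlgebra B] {lam κ : Cardinal.{0}}
    (hmk : #B ≤ Cardinal.lift.{u} lam) (a : Ordinal.{0} → B)
    (hne : ∀ ζ ξ : Ordinal.{0}, ζ < ξ → ξ < κ.ord → a ξ ≠ a ζ) : κ ≤ lam := by
  set E := Ordinal.ToType.mk (o := κ.ord) with hE
  set f : κ.ord.ToType → B := fun t => a (E.symm t).val with hf
  have hinj : Function.Injective f := by
    intro t1 t2 h
    by_contra hne'
    have hv : (E.symm t1).val ≠ (E.symm t2).val := by
      intro he
      exact hne' (E.symm.injective (Subtype.ext he))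
    rcases hv.lt_or_gt with hlt | hlt
    · exact hne _ _ hlt (E.symm t2).2 h.symm
    · exact hne _ _ hlt (E.symm t1).2 h
  have h1 : Cardinal.lift.{u} #(κ.ord.ToType) ≤ Cardinal.lift.{0} #B :=
    Cardinal.lift_mk_le'.mpr ⟨⟨f, hinj⟩⟩
  rw [Cardinal.mk_toType, Cardinal.card_ord, Cardinal.lift_uzero] at h1
  exact Cardinal.lift_le.mp (h1.trans hmk)


/-- Let `b = (⟨η_α : α < λ⟩, A)` be a base for `S` and `B^b = B_{(λ, F^b)}` the Boolean
algebra it determines.  Then for every `i < cf(λ)` the sequence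
`⟨x_α : χ_i ≤ α < χ_{i+1}⟩` of generators is ideal-independent in `B^b`; consequently
the spread, the hereditary density and the hereditary Lindelöf degree of `B^b` all
equal `λ`. -/
theorem base_determines_algebra
    (μ lam : Cardinal.{0}) (χ : Ordinal.{0} → Cardinal.{0}) (j : Ordinal.{0} → Ordinal.{0})
    (hμ : aleph0 ≤ μ) (hμpow : Cardinal.powerlt μ μ = μ)
    (hμcf : μ < lam.ord.cof) (hcflam : lam.ord.cof < lam) (hlam : lam ≤ 2 ^ μ)
    (hχ0 : χ 0 = 0) (hχ1 : lam.ord.cof < χ 1)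
    (hχreg : ∀ i : Ordinal, i + 1 < (lam.ord.cof).ord → (χ (i + 1)).IsRegular)
    (hχmono : ∀ i k : Ordinal, i < k → k < (lam.ord.cof).ord → χ i < χ k)
    (hχcont : ∀ i < (lam.ord.cof).ord, Order.IsSuccLimit i →
      χ i = sSup {c : Cardinal.{0} | ∃ k < i, c = χ k})
    (hχsup : lam = sSup {c : Cardinal.{0} | ∃ i < (lam.ord.cof).ord, c = χ i})
    (hj : ∀ α < lam.ord, j α + 1 < (lam.ord.cof).ord ∧
      (χ (j α)).ord ≤ α ∧ α < (χ (j α + 1)).ord)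
    (η : Ordinal.{0} → (Ordinal.{0} → Ordinal.{0}))
    (A : Set (Ordinal.{0} × (Ordinal.{0} → Ordinal.{0})))
    (hA : ∀ p ∈ A, p.1 < μ.ord)
    (hη : ∀ α < lam.ord, ∀ ξ < μ.ord, η α ξ < μ.ord)
    (hbase_b : ∀ α β : Ordinal, α < β → β < lam.ord → j α = j β →
      meetSeq (η α) (η β) ∉ A)
    (hbase_c : ∀ Y : Set Ordinal.{0}, Y ⊆ Set.Iio lam.ord →
      Cardinal.mk Y = Cardinal.lift.{1} lam →
      ∃ α ∈ Y, ∃ β ∈ Y, α ≠ β ∧ meetSeq (η α) (η β) ∈ A)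
    (B : Type*) [BooleanAlgebra B] (x : Ordinal.{0} → B)
    (hB : IsBwF (Set.Iio lam.ord) {f | ∃ α < lam.ord, f = fb μ η A α} B x) :
    (∀ i : Ordinal, i + 1 < (lam.ord.cof).ord →
      ∀ α, (χ i).ord ≤ α → α < (χ (i + 1)).ord →
        ∀ w : Finset Ordinal.{0},
          (∀ β ∈ w, (χ i).ord ≤ β ∧ β < (χ (i + 1)).ord ∧ β ≠ α) →
          ¬ x α ≤ w.sup x) ∧
    spreadC B = lam ∧ hdC B = lam ∧ hLC B = lam := by
  classical
  have hℵlam : ℵ₀ ≤ lam := le_of_lt (lt_of_le_of_lt hμ (hμcf.trans hcflam))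
  have hlimord : Order.IsSuccLimit lam.ord := Cardinal.isSuccLimit_ord hℵlam
  have hℵcof : ℵ₀ ≤ lam.ord.cof := Ordinal.aleph0_le_cof.mpr hlimord
  have hcoford : Order.IsSuccLimit (lam.ord.cof).ord := Cardinal.isSuccLimit_ord hℵcof
  have hsucc : ∀ i : Ordinal, i < (lam.ord.cof).ord → i + 1 < (lam.ord.cof).ord := by
    intro i hi
    rw [Ordinal.add_one_eq_succ]
    exact hcoford.succ_lt hi
  have hlt1 : ∀ i : Ordinal.{0}, i < i + 1 := fun i => by
    rw [Ordinal.add_one_eq_succ]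
    exact Order.lt_succ i
  have hbdd : BddAbove {c : Cardinal.{0} | ∃ i < (lam.ord.cof).ord, c = χ i} := by
    rw [Cardinal.bddAbove_iff_small]
    have hset : {c : Cardinal.{0} | ∃ i < (lam.ord.cof).ord, c = χ i} =
        χ '' (Set.Iio (lam.ord.cof).ord) := by
      ext c
      simp only [Set.mem_setOf_eq, Set.mem_image, Set.mem_Iio]
      constructor
      · rintro ⟨i, hi, rfl⟩; exact ⟨i, hi, rfl⟩
      · rintro ⟨i, hi, rfl⟩; exact ⟨i, hi, rfl⟩
    rw [hset]
    exact small_image χ _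
  have hchile : ∀ i, i < (lam.ord.cof).ord → χ i ≤ lam := by
    intro i hi
    conv_rhs => rw [hχsup]
    exact le_csSup hbdd ⟨i, hi, rfl⟩
  have hordle : ∀ i, i + 1 < (lam.ord.cof).ord → (χ (i + 1)).ord ≤ lam.ord :=
    fun i hi => Cardinal.ord_le_ord.mpr (hchile _ hi)
  have hχle : ∀ i k, i ≤ k → k < (lam.ord.cof).ord → χ i ≤ χ k := by
    intro i k hik hk
    rcases eq_or_lt_of_le hik with rfl | h
    · exact le_rfl
    · exact (hχmono i k h hk).le
  have hℵχ : ∀ i, i + 1 < (lam.ord.cof).ord → ℵ₀ ≤ χ (i + 1) := by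
    intro i hi
    have h1 : χ 1 ≤ χ (i + 1) :=
      hχle 1 (i + 1) (by simpa using add_le_add_right (Ordinal.zero_le i) 1) hi
    exact le_trans (hℵcof.trans (le_of_lt hχ1)) h1
  have hjeq : ∀ i, i + 1 < (lam.ord.cof).ord → ∀ α, (χ i).ord ≤ α → α < (χ (i + 1)).ord →
      j α = i := by
    intro i hi α hα1 hα2
    have hαlam : α < lam.ord := lt_of_lt_of_le hα2 (hordle i hi)
    obtain ⟨hj1, hj2, hj3⟩ := hj α hαlam
    have hilt : i < (lam.ord.cof).ord := lt_trans (hlt1 i) hi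
    have hjαlt : j α < (lam.ord.cof).ord := lt_trans (hlt1 _) hj1
    rcases lt_trichotomy (j α) i with h | h | h
    · exfalso
      have h2 : j α + 1 ≤ i := by
        rw [Ordinal.add_one_eq_succ]; exact Order.succ_le_of_lt h
      have h3 : χ (j α + 1) ≤ χ i := hχle _ _ h2 hilt
      exact absurd hj3 (not_lt.mpr (le_trans (Cardinal.ord_le_ord.mpr h3) hα1))
    · exact h
    · exfalso
      have h2 : i + 1 ≤ j α := by
        rw [Ordinal.add_one_eq_succ]; exact Order.succ_le_of_lt h
      have h3 : χ (i + 1) ≤ χ (j α) := hχle _ _ h2 hjαlt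
      exact absurd hα2 (not_lt.mpr (le_trans (Cardinal.ord_le_ord.mpr h3) hj2))
  have hfbf : ∀ i, i + 1 < (lam.ord.cof).ord → ∀ α β, (χ i).ord ≤ α → α < (χ (i + 1)).ord →
      (χ i).ord ≤ β → β < (χ (i + 1)).ord → α ≠ β → fb μ η A α β = false := by
    intro i hi α β hα1 hα2 hβ1 hβ2 hne
    refine fb_eq_false hne ?_
    have hjα := hjeq i hi α hα1 hα2
    have hjβ := hjeq i hi β hβ1 hβ2
    rcases hne.lt_or_gt with h | h
    · exact hbase_b α β h (lt_of_lt_of_le hβ2 (hordle i hi)) (hjα.trans hjβ.symm)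
    · rw [meetSeq_comm]
      exact hbase_b β α h (lt_of_lt_of_le hα2 (hordle i hi)) (hjβ.trans hjα.symm)
  have part1 : ∀ i : Ordinal, i + 1 < (lam.ord.cof).ord →
      ∀ α, (χ i).ord ≤ α → α < (χ (i + 1)).ord →
        ∀ w : Finset Ordinal.{0},
          (∀ β ∈ w, (χ i).ord ≤ β ∧ β < (χ (i + 1)).ord ∧ β ≠ α) →
          ¬ x α ≤ w.sup x := by
    intro i hi α hα1 hα2 w hw
    refine not_le_sup hB (lt_of_lt_of_le hα2 (hordle i hi)) ?_
    intro β hβ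
    obtain ⟨h1, h2, h3⟩ := hw β hβ
    exact ⟨lt_of_lt_of_le h2 (hordle i hi), hfbf i hi α β hα1 hα2 h1 h2 (Ne.symm h3)⟩
  have hmkB := mk_le_of_isBwF hℵlam hB
  have hcard_le : ∀ (κ : Cardinal.{0}) (a : Ordinal.{0} → B),
      (∀ ζ ξ : Ordinal.{0}, ζ < ξ → ξ < κ.ord → a ξ ≠ a ζ) → κ ≤ lam :=
    fun κ a hga => le_lam_of_pairwise_ne hmkB a hga
  have hblocks : ∀ i, i + 1 < (lam.ord.cof).ord →
      IdealIndependent (χ (i + 1)).ord (fun ξ => x ((χ i).ord + ξ)) := by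
    intro i hi
    have hadd : ∀ ξ, ξ < (χ (i + 1)).ord → (χ i).ord + ξ < (χ (i + 1)).ord := by
      intro ξ hξ
      rw [Cardinal.lt_ord, Ordinal.card_add, Cardinal.card_ord]
      refine Cardinal.add_lt_of_lt (hℵχ i hi) (hχmono i (i + 1) (hlt1 i) hi) ?_
      rwa [← Cardinal.lt_ord]
    intro ξ hξ w hw
    have hsup : w.sup (fun ζ => x ((χ i).ord + ζ)) = (w.image ((χ i).ord + ·)).sup x := by
      rw [Finset.sup_image]
      rfl
    rw [hsup]
    refine part1 i hi ((χ i).ord + ξ) (le_self_add) (hadd ξ hξ) _ ?_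
    intro β hβ
    obtain ⟨ζ, hζw, rfl⟩ := Finset.mem_image.mp hβ
    obtain ⟨hζκ, hζξ⟩ := hw ζ hζw
    exact ⟨le_self_add, hadd ζ hζκ, fun h => hζξ (add_left_cancel_iff.mp h)⟩
  have hgen : ∀ S : Set Cardinal.{0}, (∀ κ ∈ S, κ ≤ lam) →
      (∀ i, i + 1 < (lam.ord.cof).ord → χ (i + 1) ∈ S) → sSup S = lam := by
    intro S hub hmem
    have hBddS : BddAbove S := ⟨lam, hub⟩
    have hne : S.Nonempty := ⟨χ (0 + 1), hmem 0 (hsucc 0 hcoford.pos)⟩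
    refine le_antisymm (csSup_le hne hub) ?_
    conv_lhs => rw [hχsup]
    refine csSup_le ⟨χ 0, 0, hcoford.pos, rfl⟩ ?_
    rintro c ⟨i, hi, rfl⟩
    have h1 : χ i ≤ χ (i + 1) := (hχmono i (i + 1) (hlt1 i) (hsucc i hi)).le
    exact h1.trans (le_csSup hBddS (hmem i (hsucc i hi)))
  refine ⟨part1, ?_, ?_, ?_⟩
  · refine hgen _ ?_ ?_
    · rintro κ ⟨a, ha⟩
      refine hcard_le κ a ?_
      intro ζ ξ hζξ hξκ heq
      refine ha ξ hξκ {ζ} ?_ ?_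
      · intro z hz
        rw [Finset.mem_singleton] at hz
        subst hz
        exact ⟨lt_trans hζξ hξκ, ne_of_lt hζξ⟩
      · rw [Finset.sup_singleton]
        exact le_of_eq heq
    · intro i hi
      exact ⟨_, hblocks i hi⟩
  · refine hgen _ ?_ ?_
    · rintro κ ⟨a, ha⟩
      refine hcard_le κ a ?_
      intro ζ ξ hζξ hξκ heq
      refine ha ζ (lt_trans hζξ hξκ) {ξ} ?_ ?_
      · intro z hz
        rw [Finset.mem_singleton] at hz
        subst hz
        exact ⟨hξκ, hζξ⟩
      · rw [Finset.sup_singleton]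
        exact le_of_eq heq.symm
    · intro i hi
      refine ⟨_, fun ξ hξ w hw => hblocks i hi ξ hξ w (fun ζ hζ => ?_)⟩
      exact ⟨(hw ζ hζ).1, ((hw ζ hζ).2).ne'⟩
  · refine hgen _ ?_ ?_
    · rintro κ ⟨a, ha⟩
      refine hcard_le κ a ?_
      intro ζ ξ hζξ hξκ heq
      refine ha ξ hξκ {ζ} ?_ ?_
      · intro z hz
        rw [Finset.mem_singleton] at hz
        subst hz
        exact hζξ
      · rw [Finset.sup_singleton]
        exact le_of_eq heq
    · intro i hi
      refine ⟨_, fun ξ hξ w hw => hblocks i hi ξ hξ w (fun ζ hζ => ?_)⟩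
      exact ⟨lt_trans (hw ζ hζ) hξ, (hw ζ hζ).ne⟩
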